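/- Define ω₊ := (1/4)(I₄ + Y₄) and ω₋ := (1/4)(I₄ − Y₄). Then: (a) ω₊ and ω₋ are two-rebit states (real symmetric positive semidefinite 4×4 matrices of trace 1); (b) neither ω₊ nor ω₋ is real-separable; (c) over ℂ, with σ_y the complex 2×2 matrix with rows (0, −i), (i, 0) and P_± := (1/2)(I₂ ± σ_y), the complex embeddings satisfy ι(ω₊) = (1/2)(P₊ ⊗ₖ P₊ + P₋ ⊗ₖ P₋) and ι(ω₋) = (1/2)(P₊ ⊗ₖ P₋ + P₋ ⊗ₖ P₊); hence both embeddings are complex-separable. -/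

import Mathlib

open Matrix Kronecker
open scoped ComplexOrder

/-- The real 2×2 matrix with rows (0, −1) and (1, 0). -/
noncomputable def y : Matrix (Fin 2) (Fin 2) ℝ := !![0, -1; 1, 0]

/-- The real 4×4 matrix representing σ_y ⊗ σ_y. -/
noncomputable def Y₄ : Matrix (Fin 2 × Fin 2) (Fin 2 × Fin 2) ℝ := -(y ⊗ₖ y)

/-- A two-rebit state: a real symmetric positive semidefinite 4×4 matrix of trace 1. -/
def IsTwoRebitState (ρ : Matrix (Fin 2 × Fin 2) (Fin 2 × Fin 2) ℝ) : Prop :=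
  ρ.IsSymm ∧ ρ.PosSemidef ∧ ρ.trace = 1

/-- Real separability: a convex combination of Kronecker products of real
symmetric positive semidefinite trace-one 2×2 matrices. -/
def RealSeparable (ρ : Matrix (Fin 2 × Fin 2) (Fin 2 × Fin 2) ℝ) : Prop :=
  ∃ (n : ℕ) (p : Fin n → ℝ) (A B : Fin n → Matrix (Fin 2) (Fin 2) ℝ),
    (∀ k, 0 ≤ p k) ∧ ((∑ k, p k) = 1) ∧
    (∀ k, (A k).IsSymm ∧ (A k).PosSemidef ∧ (A k).trace = 1) ∧
    (∀ k, (B k).IsSymm ∧ (B k).PosSemidef ∧ (B k).trace = 1) ∧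
    ρ = ∑ k, p k • (A k ⊗ₖ B k)

/-- Complex separability: a convex combination of Kronecker products of
complex positive semidefinite trace-one 2×2 matrices. -/
def ComplexSeparable (σ : Matrix (Fin 2 × Fin 2) (Fin 2 × Fin 2) ℂ) : Prop :=
  ∃ (n : ℕ) (p : Fin n → ℝ) (A B : Fin n → Matrix (Fin 2) (Fin 2) ℂ),
    (∀ k, 0 ≤ p k) ∧ ((∑ k, p k) = 1) ∧
    (∀ k, (A k).PosSemidef ∧ (A k).trace = 1) ∧
    (∀ k, (B k).PosSemidef ∧ (B k).trace = 1) ∧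
    σ = ∑ k, (p k : ℂ) • (A k ⊗ₖ B k)

/-- The state ω₊ = (1/4)(I₄ + σ_y ⊗ σ_y). -/
noncomputable def ωp : Matrix (Fin 2 × Fin 2) (Fin 2 × Fin 2) ℝ :=
  (1 / 4 : ℝ) • ((1 : Matrix (Fin 2 × Fin 2) (Fin 2 × Fin 2) ℝ) + Y₄)

/-- The state ω₋ = (1/4)(I₄ − σ_y ⊗ σ_y). -/
noncomputable def ωm : Matrix (Fin 2 × Fin 2) (Fin 2 × Fin 2) ℝ :=
  (1 / 4 : ℝ) • ((1 : Matrix (Fin 2 × Fin 2) (Fin 2 × Fin 2) ℝ) - Y₄)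

/-- The complex Pauli matrix σ_y. -/
noncomputable def σy : Matrix (Fin 2) (Fin 2) ℂ := !![0, -Complex.I; Complex.I, 0]

/-- The projector P₊ = (1/2)(I₂ + σ_y). -/
noncomputable def Pp : Matrix (Fin 2) (Fin 2) ℂ :=
  (1 / 2 : ℂ) • ((1 : Matrix (Fin 2) (Fin 2) ℂ) + σy)

/-- The projector P₋ = (1/2)(I₂ − σ_y). -/
noncomputable def Pm : Matrix (Fin 2) (Fin 2) ℂ :=
  (1 / 2 : ℂ) • ((1 : Matrix (Fin 2) (Fin 2) ℂ) - σy)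

/-!
`Y₄` is a symmetric involution of trace zero, so `(1 ± Y₄) / 2` are orthogonal projections and
`ω± = (1 ± Y₄) / 4` are states. As `y` is antisymmetric, `tr (A y) = 0` for every symmetric `A`,
hence every real-separable `ρ` has `tr (ρ Y₄) = -∑ pₖ tr (Aₖ y) tr (Bₖ y) = 0`, while
`tr (ω± Y₄) = ±1`. Over `ℂ`, `y = -i σ_y` gives `ι Y₄ = σ_y ⊗ σ_y`, and expanding the products of
the eigenprojections `P± = (1 ± σ_y) / 2` of the involution `σ_y` yields the decompositions.
-/

open scoped MatrixOrder

section StarProjection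

variable {𝕜 A : Type*} [Field 𝕜] [StarRing 𝕜] [Ring A] [StarRing A] [Algebra 𝕜 A]
  [StarModule 𝕜 A]

theorem IsSelfAdjoint.isStarProjection_half_smul_one_add {s : A} (hs : IsSelfAdjoint s)
    (hss : s * s = 1) : IsStarProjection ((1 / 2 : 𝕜) • (1 + s)) where
  isIdempotentElem := by
    -- in characteristic two `1 / 2 = 0`
    rcases eq_or_ne (2 : 𝕜) 0 with h2 | h2
    · simp [h2, IsIdempotentElem]
    have : (1 + s) * (1 + s) = (2 : 𝕜) • (1 + s) := by
      simp only [add_mul, mul_add, hss, one_mul, mul_one, two_smul]; abel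
    rw [IsIdempotentElem, smul_mul_smul_comm, this, smul_smul]
    congr 1
    field_simp
  isSelfAdjoint := by
    refine IsSelfAdjoint.smul ?_ ((IsSelfAdjoint.one A).add hs)
    simp [IsSelfAdjoint]

theorem IsSelfAdjoint.isStarProjection_half_smul_one_sub {s : A} (hs : IsSelfAdjoint s)
    (hss : s * s = 1) : IsStarProjection ((1 / 2 : 𝕜) • (1 - s)) := by
  simpa [sub_eq_add_neg] using
    hs.neg.isStarProjection_half_smul_one_add (𝕜 := 𝕜) (by simpa using hss)

end StarProjection

theorem Matrix.trace_mul_eq_zero_of_isSymm {n R : Type*} [Fintype n] [CommRing R]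
    [NoZeroDivisors R] [CharZero R] {A S : Matrix n n R} (hA : A.IsSymm) (hS : Sᵀ = -S) :
    (A * S).trace = 0 := by
  refine CharZero.eq_neg_self_iff.mp ?_
  calc (A * S).trace = (A * S)ᵀ.trace := (trace_transpose _).symm
    _ = -(A * S).trace := by rw [transpose_mul, hS, hA.eq, neg_mul, trace_neg, trace_mul_comm]

theorem Matrix.neg_kronecker_neg {l m n p α : Type*} [Ring α] (A : Matrix l m α)
    (B : Matrix n p α) : (-A) ⊗ₖ (-B) = A ⊗ₖ B := by
  ext; simp

theorem Matrix.half_smul_one_add_kronecker_add {n K : Type*} [Field K] [DecidableEq n]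
    (S : Matrix n n K) :
    ((1 / 2 : K) • (1 + S)) ⊗ₖ ((1 / 2 : K) • (1 + S)) +
      ((1 / 2 : K) • (1 - S)) ⊗ₖ ((1 / 2 : K) • (1 - S)) = (1 / 2 : K) • (1 + S ⊗ₖ S) := by
  simp only [sub_eq_add_neg, ← neg_one_smul K S, smul_kronecker, kronecker_smul, add_kronecker,
    kronecker_add, one_kronecker_one, smul_smul]
  rcases eq_or_ne (2 : K) 0 with h2 | h2
  · simp [h2]
  · match_scalars <;> field_simp <;> ring

theorem Matrix.half_smul_one_add_kronecker_sub {n K : Type*} [Field K] [DecidableEq n]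
    (S : Matrix n n K) :
    ((1 / 2 : K) • (1 + S)) ⊗ₖ ((1 / 2 : K) • (1 - S)) +
      ((1 / 2 : K) • (1 - S)) ⊗ₖ ((1 / 2 : K) • (1 + S)) = (1 / 2 : K) • (1 - S ⊗ₖ S) := by
  simp only [sub_eq_add_neg, ← neg_one_smul K S, smul_kronecker, kronecker_smul, add_kronecker,
    kronecker_add, one_kronecker_one, smul_smul]
  rcases eq_or_ne (2 : K) 0 with h2 | h2
  · simp [h2]
  · match_scalars <;> field_simp <;> ring

theorem y_transpose : yᵀ = -y := by
  ext i j; fin_cases i <;> fin_cases j <;> simp [y]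

theorem y_mul_y : y * y = -1 := by
  ext i j; fin_cases i <;> fin_cases j <;> simp [y]

theorem trace_y : y.trace = 0 := by
  simp [y, trace_fin_two]

theorem isSymm_Y₄ : Y₄.IsSymm := by
  rw [IsSymm, Y₄, transpose_neg, ← kroneckerMap_transpose, y_transpose, neg_kronecker_neg]

theorem Y₄_mul_Y₄ : Y₄ * Y₄ = 1 := by
  rw [Y₄, neg_mul_neg, ← mul_kronecker_mul, y_mul_y, neg_kronecker_neg, one_kronecker_one]

theorem trace_Y₄ : Y₄.trace = 0 := by
  simp [Y₄, trace_kronecker, trace_y]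

theorem trace_one_fin_two_prod : (1 : Matrix (Fin 2 × Fin 2) (Fin 2 × Fin 2) ℝ).trace = 4 := by
  simp only [trace_one, Fintype.card_prod, Fintype.card_fin]; norm_num

theorem RealSeparable.trace_mul_Y₄_eq_zero {ρ : Matrix (Fin 2 × Fin 2) (Fin 2 × Fin 2) ℝ}
    (hρ : RealSeparable ρ) : (ρ * Y₄).trace = 0 := by
  obtain ⟨n, p, A, B, -, -, hA, -, rfl⟩ := hρ
  rw [Finset.sum_mul, trace_sum]
  refine Finset.sum_eq_zero fun k _ => ?_
  rw [smul_mul, trace_smul, Y₄, mul_neg, ← mul_kronecker_mul, trace_neg, trace_kronecker,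
    trace_mul_eq_zero_of_isSymm (hA k).1 y_transpose, zero_mul, neg_zero, smul_zero]

theorem isTwoRebitState_quarter_smul_one_add {S : Matrix (Fin 2 × Fin 2) (Fin 2 × Fin 2) ℝ}
    (hS : S.IsSymm) (hSS : S * S = 1) (htr : S.trace = 0) :
    IsTwoRebitState ((1 / 4 : ℝ) • (1 + S)) := by
  have hself : IsSelfAdjoint S := isHermitian_iff_isSymm.mpr hS
  refine ⟨(isSymm_one.add hS).smul _, ?_, ?_⟩
  · have hP := (hself.isStarProjection_half_smul_one_add (𝕜 := ℝ) hSS).nonneg.posSemidef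
    rw [show (1 / 4 : ℝ) = 1 / 2 * (1 / 2) by norm_num, ← smul_smul]
    exact hP.smul (by norm_num)
  · rw [trace_smul, trace_add, htr, trace_one_fin_two_prod]; norm_num

theorem trace_quarter_smul_one_add_mul {S : Matrix (Fin 2 × Fin 2) (Fin 2 × Fin 2) ℝ}
    (hSS : S * S = 1) (htr : S.trace = 0) :
    (((1 / 4 : ℝ) • (1 + S)) * S).trace = 1 := by
  rw [smul_mul, add_mul, one_mul, hSS, trace_smul, trace_add, htr, trace_one_fin_two_prod]; norm_num

theorem isTwoRebitState_quarter_smul_one_sub {S : Matrix (Fin 2 × Fin 2) (Fin 2 × Fin 2) ℝ}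
    (hS : S.IsSymm) (hSS : S * S = 1) (htr : S.trace = 0) :
    IsTwoRebitState ((1 / 4 : ℝ) • (1 - S)) := by
  rw [sub_eq_add_neg]
  exact isTwoRebitState_quarter_smul_one_add hS.neg (by rwa [neg_mul_neg])
    (by rw [trace_neg, htr, neg_zero])

theorem trace_quarter_smul_one_sub_mul {S : Matrix (Fin 2 × Fin 2) (Fin 2 × Fin 2) ℝ}
    (hSS : S * S = 1) (htr : S.trace = 0) :
    (((1 / 4 : ℝ) • (1 - S)) * S).trace = -1 := by
  rw [smul_mul, sub_mul, one_mul, hSS, trace_smul, trace_sub, htr, trace_one_fin_two_prod]; norm_num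

theorem not_realSeparable_ωp : ¬ RealSeparable ωp := fun h =>
  one_ne_zero <| (trace_quarter_smul_one_add_mul Y₄_mul_Y₄ trace_Y₄).symm.trans
    h.trace_mul_Y₄_eq_zero

theorem not_realSeparable_ωm : ¬ RealSeparable ωm := fun h =>
  neg_ne_zero.mpr one_ne_zero <| (trace_quarter_smul_one_sub_mul Y₄_mul_Y₄ trace_Y₄).symm.trans
    h.trace_mul_Y₄_eq_zero

theorem isSelfAdjoint_σy : IsSelfAdjoint σy := by
  ext i j; fin_cases i <;> fin_cases j <;> simp [σy]

theorem σy_mul_σy : σy * σy = 1 := by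
  ext i j; fin_cases i <;> fin_cases j <;> simp [σy]

theorem trace_σy : σy.trace = 0 := by
  simp [σy, trace_fin_two]

theorem map_ofReal_Y₄ : Y₄.map Complex.ofReal = σy ⊗ₖ σy := by
  ext ⟨i, j⟩ ⟨k, l⟩
  fin_cases i <;> fin_cases j <;> fin_cases k <;> fin_cases l <;> simp [Y₄, y, σy]

theorem posSemidef_Pp : Pp.PosSemidef :=
  (isSelfAdjoint_σy.isStarProjection_half_smul_one_add (𝕜 := ℂ) σy_mul_σy).nonneg.posSemidef

theorem posSemidef_Pm : Pm.PosSemidef :=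
  (isSelfAdjoint_σy.isStarProjection_half_smul_one_sub (𝕜 := ℂ) σy_mul_σy).nonneg.posSemidef

theorem trace_Pp : Pp.trace = 1 := by
  simp [Pp, trace_add, trace_σy]

theorem trace_Pm : Pm.trace = 1 := by
  simp [Pm, trace_sub, trace_σy]

theorem map_ofReal_ωp : ωp.map Complex.ofReal = (1 / 2 : ℂ) • (Pp ⊗ₖ Pp + Pm ⊗ₖ Pm) := by
  have : ωp.map Complex.ofReal = (1 / 4 : ℂ) • (1 + Y₄.map Complex.ofReal) := by
    ext i j; by_cases h : i = j <;> simp [ωp, one_apply, h, mul_add]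
  rw [this, map_ofReal_Y₄, Pp, Pm, half_smul_one_add_kronecker_add, smul_smul]
  norm_num

theorem map_ofReal_ωm : ωm.map Complex.ofReal = (1 / 2 : ℂ) • (Pp ⊗ₖ Pm + Pm ⊗ₖ Pp) := by
  have : ωm.map Complex.ofReal = (1 / 4 : ℂ) • (1 - Y₄.map Complex.ofReal) := by
    ext i j; by_cases h : i = j <;> simp [ωm, one_apply, h]
  rw [this, map_ofReal_Y₄, Pp, Pm, half_smul_one_add_kronecker_sub, smul_smul]
  norm_num

theorem ComplexSeparable.of_eq_half_smul_add {σ : Matrix (Fin 2 × Fin 2) (Fin 2 × Fin 2) ℂ}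
    {A₁ B₁ A₂ B₂ : Matrix (Fin 2) (Fin 2) ℂ}
    (hA₁ : A₁.PosSemidef ∧ A₁.trace = 1) (hB₁ : B₁.PosSemidef ∧ B₁.trace = 1)
    (hA₂ : A₂.PosSemidef ∧ A₂.trace = 1) (hB₂ : B₂.PosSemidef ∧ B₂.trace = 1)
    (h : σ = (1 / 2 : ℂ) • (A₁ ⊗ₖ B₁ + A₂ ⊗ₖ B₂)) : ComplexSeparable σ := by
  refine ⟨2, ![1 / 2, 1 / 2], ![A₁, A₂], ![B₁, B₂], ?_, ?_, ?_, ?_, ?_⟩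
  · intro k; fin_cases k <;> norm_num
  · norm_num
  · intro k; fin_cases k <;> assumption
  · intro k; fin_cases k <;> assumption
  · rw [h, Fin.sum_univ_two, smul_add]
    norm_num

/-- **The paper's states ω_± (Eqs. (36)–(37)).**
(a) ω₊ and ω₋ are two-rebit states; (b) neither is real-separable;
(c) their complex embeddings decompose as convex mixtures of products of the
σ_y eigenprojectors, hence both embeddings are complex-separable. -/
theorem stmt9 :
    (IsTwoRebitState ωp ∧ IsTwoRebitState ωm) ∧
    (¬ RealSeparable ωp ∧ ¬ RealSeparable ωm) ∧
    (ωp.map (Complex.ofReal) = (1 / 2 : ℂ) • (Pp ⊗ₖ Pp + Pm ⊗ₖ Pm) ∧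
      ωm.map (Complex.ofReal) = (1 / 2 : ℂ) • (Pp ⊗ₖ Pm + Pm ⊗ₖ Pp)) ∧
    (ComplexSeparable (ωp.map (Complex.ofReal)) ∧
      ComplexSeparable (ωm.map (Complex.ofReal))) := by
  have hPp : Pp.PosSemidef ∧ Pp.trace = 1 := ⟨posSemidef_Pp, trace_Pp⟩
  have hPm : Pm.PosSemidef ∧ Pm.trace = 1 := ⟨posSemidef_Pm, trace_Pm⟩
  exact ⟨⟨isTwoRebitState_quarter_smul_one_add isSymm_Y₄ Y₄_mul_Y₄ trace_Y₄,
      isTwoRebitState_quarter_smul_one_sub isSymm_Y₄ Y₄_mul_Y₄ trace_Y₄⟩,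
    ⟨not_realSeparable_ωp, not_realSeparable_ωm⟩,
    ⟨map_ofReal_ωp, map_ofReal_ωm⟩,
    .of_eq_half_smul_add hPp hPp hPm hPm map_ofReal_ωp,
    .of_eq_half_smul_add hPp hPm hPm hPp map_ofReal_ωm⟩
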